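/- arXiv:1807.00288 — 8 statements merged into one kernel-verified Lean document; each statement's English description precedes it below -/
import Mathlib

section
/- Let m_r > m_b > 0. Then the bubble function B₂(s) extends continuously to s = 0: the limit of B₂(s) as s → 0 (s ≠ 0, |s| < (m_r − m_b)²) exists and equals 1 + ((m_r² + m_b²)/(2(m_r² − m_b²)))·ln(m_r²/m_b²). In particular the principal sheet of the bubble amplitude is free of singularities at s = 0. -/
/-!
With `a = m_r²`, `b = m_b²`, the bubble is `B₂(s) = N(s) / (2s)` for the numerator `N` below, which
is differentiable at `0`: there `√λ = a - b` and the logarithm equals `-ln(a/b)`, so `N(0) = 0`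
and the limit is `N'(0) / 2`. The chain rule gives `(√λ)'(0) = -(a + b)/(a - b)` and derivative
`2/(a - b)` for the logarithm, hence `N'(0) = (a + b)/(a - b) · ln(a/b) + 2`.
-/

open Filter

/-- The Källén function λ(a,b,c) := a² + b² + c² − 2(ab + bc + ca). -/
noncomputable def kallen (a b c : ℝ) : ℝ := a ^ 2 + b ^ 2 + c ^ 2 - 2 * (a * b + b * c + c * a)

/-- The subtracted bubble function on the principal sheet:
`B₂(s) = (√λ/(2s))·ln((m_r²+m_b²−s−√λ)/(m_r²+m_b²−s+√λ)) + ((m_r²−m_b²)/(2s))·ln(m_r²/m_b²)`,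
with `λ = λ(s, m_r², m_b²)`. -/
noncomputable def B2 (m_r m_b s : ℝ) : ℝ :=
  Real.sqrt (kallen s (m_r ^ 2) (m_b ^ 2)) / (2 * s) *
      Real.log ((m_r ^ 2 + m_b ^ 2 - s - Real.sqrt (kallen s (m_r ^ 2) (m_b ^ 2))) /
        (m_r ^ 2 + m_b ^ 2 - s + Real.sqrt (kallen s (m_r ^ 2) (m_b ^ 2)))) +
    (m_r ^ 2 - m_b ^ 2) / (2 * s) * Real.log (m_r ^ 2 / m_b ^ 2)

open Real

theorem HasDerivAt.tendsto_div_of_apply_zero {f : ℝ → ℝ} {f' : ℝ} (hf : HasDerivAt f f' 0)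
    (h0 : f 0 = 0) : Tendsto (fun s => f s / s) (nhdsWithin 0 {0}ᶜ) (nhds f') := by
  refine (hasDerivAt_iff_tendsto_slope.mp hf).congr fun s => ?_
  rw [slope_def_field, h0, sub_zero, sub_zero]

theorem kallen_zero_left (a b : ℝ) : kallen 0 a b = (a - b) ^ 2 := by
  unfold kallen; ring

theorem hasDerivAt_kallen_left (a b s : ℝ) :
    HasDerivAt (fun s => kallen s a b) (2 * s - 2 * (a + b)) s := by
  have hpoly :
      HasDerivAt (fun s => s ^ 2 - 2 * (a + b) * s + (a - b) ^ 2) (2 * s - 2 * (a + b)) s := by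
    simpa using ((hasDerivAt_pow 2 s).sub ((hasDerivAt_id' s).const_mul (2 * (a + b)))).add_const
      ((a - b) ^ 2)
  convert hpoly using 2 with s
  unfold kallen
  ring

noncomputable def bubbleNumerator (a b s : ℝ) : ℝ :=
  √(kallen s a b) * log ((a + b - s - √(kallen s a b)) / (a + b - s + √(kallen s a b))) +
    (a - b) * log (a / b)

theorem B2_eq_bubbleNumerator_div (m_r m_b s : ℝ) :
    B2 m_r m_b s = bubbleNumerator (m_r ^ 2) (m_b ^ 2) s / (2 * s) := by
  rw [B2, bubbleNumerator, add_div, mul_div_right_comm, mul_div_right_comm (m_r ^ 2 - m_b ^ 2)]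

section

variable {a b : ℝ}

theorem sqrt_kallen_zero_left (h : b ≤ a) : √(kallen 0 a b) = a - b := by
  rw [kallen_zero_left, sqrt_sq (sub_nonneg.mpr h)]

theorem log_ratio_zero (h : b ≤ a) :
    log ((a + b - 0 - √(kallen 0 a b)) / (a + b - 0 + √(kallen 0 a b))) = -log (a / b) := by
  rw [sqrt_kallen_zero_left h, ← log_inv, inv_div]
  ring_nf

theorem hasDerivAt_sqrt_kallen_zero (h : b < a) :
    HasDerivAt (fun s => √(kallen s a b)) (-(a + b) / (a - b)) 0 := by
  have hne : kallen 0 a b ≠ 0 := by rw [kallen_zero_left]; nlinarith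
  convert (hasDerivAt_kallen_left a b 0).sqrt hne using 1
  rw [sqrt_kallen_zero_left h.le]
  field_simp [(sub_pos.mpr h).ne']
  ring

theorem hasDerivAt_log_ratio_zero (hb : 0 < b) (h : b < a) :
    HasDerivAt (fun s => log ((a + b - s - √(kallen s a b)) / (a + b - s + √(kallen s a b))))
      (2 / (a - b)) 0 := by
  have hg := hasDerivAt_sqrt_kallen_zero h
  have hN := ((hasDerivAt_id' 0).const_sub (a + b)).sub hg
  have hD := ((hasDerivAt_id' 0).const_sub (a + b)).add hg
  have hsqrt := sqrt_kallen_zero_left h.le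
  have hD0 : a + b - 0 + √(kallen 0 a b) ≠ 0 := by rw [hsqrt]; linarith
  have hQ0 : (a + b - 0 - √(kallen 0 a b)) / (a + b - 0 + √(kallen 0 a b)) ≠ 0 := by
    rw [hsqrt]; apply div_ne_zero <;> linarith
  refine ((hN.div hD hD0).log hQ0).congr_deriv ?_
  simp only [Pi.add_apply, Pi.sub_apply, Pi.div_apply, hsqrt]
  field_simp [hb.ne', (hb.trans h).ne', (sub_pos.mpr h).ne']
  ring

theorem bubbleNumerator_zero (h : b ≤ a) : bubbleNumerator a b 0 = 0 := by
  rw [bubbleNumerator, log_ratio_zero h, sqrt_kallen_zero_left h]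
  ring

theorem hasDerivAt_bubbleNumerator_zero (hb : 0 < b) (h : b < a) :
    HasDerivAt (bubbleNumerator a b) ((a + b) / (a - b) * log (a / b) + 2) 0 := by
  refine (((hasDerivAt_sqrt_kallen_zero h).mul (hasDerivAt_log_ratio_zero hb h)).add_const
    ((a - b) * log (a / b))).congr_deriv ?_
  rw [log_ratio_zero h.le, sqrt_kallen_zero_left h.le]
  field_simp [(sub_pos.mpr h).ne']

end

/-- For `m_r > m_b > 0`, the bubble function `B₂` extends continuously to `s = 0`:
its limit as `s → 0` (over `s ≠ 0`, `|s| < (m_r − m_b)²`) exists and equals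
`1 + ((m_r² + m_b²)/(2(m_r² − m_b²)))·ln(m_r²/m_b²)`; the principal sheet of the
bubble amplitude is free of singularities at `s = 0`. -/
theorem bubble_regular_at_zero (m_r m_b : ℝ) (hb : 0 < m_b) (hrb : m_b < m_r) :
    Tendsto (fun s : ℝ => B2 m_r m_b s)
      (nhdsWithin 0 {s : ℝ | s ≠ 0 ∧ |s| < (m_r - m_b) ^ 2})
      (nhds (1 + (m_r ^ 2 + m_b ^ 2) / (2 * (m_r ^ 2 - m_b ^ 2)) *
        Real.log (m_r ^ 2 / m_b ^ 2))) := by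
  have hsq : m_b ^ 2 < m_r ^ 2 := by gcongr
  have hslope := (hasDerivAt_bubbleNumerator_zero (by positivity) hsq).tendsto_div_of_apply_zero
    (bubbleNumerator_zero hsq.le)
  have hset : {s : ℝ | s ≠ 0 ∧ |s| < (m_r - m_b) ^ 2} ⊆ {0}ᶜ := fun s hs => hs.1
  simp_rw [B2_eq_bubbleNumerator_div, div_mul_eq_div_div_swap]
  convert (hslope.div_const 2).mono_left (nhdsWithin_mono 0 hset) using 2
  ring
end

section
/- Let m_r > m_b > 0. Then as s → (m_r − m_b)² from below, the first term of the bubble function, (√λ(s,m_r²,m_b²)/(2s))·ln((m_r²+m_b²−s−√λ(s,m_r²,m_b²))/(m_r²+m_b²−s+√λ(s,m_r²,m_b²))), tends to 0, and hence B₂(s) tends to the finite value ((m_r+m_b)/(2(m_r−m_b)))·ln(m_r²/m_b²). In particular the principal sheet of the bubble amplitude is free of singularities at the pseudo-threshold s = (m_r − m_b)². -/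
open Filter

open Topology

/-!
At the pseudo-threshold `s₀ = (m_r − m_b)²` the Källén function vanishes while
`m_r² + m_b² − s₀ = 2 m_r m_b ≠ 0`, so the argument of the logarithm tends to `1`. The
square-root-times-logarithm term is therefore continuous at `s₀` with value `0`, and the
remaining mass-logarithm term is continuous there since `s₀ ≠ 0`.
-/

lemma kallen_sq_sq (s a b : ℝ) :
    kallen s (a ^ 2) (b ^ 2) = (s - (a + b) ^ 2) * (s - (a - b) ^ 2) := by
  unfold kallen; ring

lemma kallen_pseudothreshold (a b : ℝ) : kallen ((a - b) ^ 2) (a ^ 2) (b ^ 2) = 0 := by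
  rw [kallen_sq_sq, sub_self, mul_zero]

lemma continuous_kallen_sq_sq (a b : ℝ) : Continuous fun s => kallen s (a ^ 2) (b ^ 2) := by
  unfold kallen; fun_prop

noncomputable def bubbleSqrtLogTerm (m_r m_b s : ℝ) : ℝ :=
  Real.sqrt (kallen s (m_r ^ 2) (m_b ^ 2)) / (2 * s) *
    Real.log ((m_r ^ 2 + m_b ^ 2 - s - Real.sqrt (kallen s (m_r ^ 2) (m_b ^ 2))) /
      (m_r ^ 2 + m_b ^ 2 - s + Real.sqrt (kallen s (m_r ^ 2) (m_b ^ 2))))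

lemma B2_eq_bubbleSqrtLogTerm_add (m_r m_b s : ℝ) :
    B2 m_r m_b s =
      bubbleSqrtLogTerm m_r m_b s + (m_r ^ 2 - m_b ^ 2) / (2 * s) * Real.log (m_r ^ 2 / m_b ^ 2) :=
  rfl

section Pseudothreshold

variable {a b : ℝ}

lemma tendsto_bubbleSqrtLogTerm_pseudothreshold (ha : a ≠ 0) (hb : b ≠ 0) (hab : a ≠ b) :
    Tendsto (bubbleSqrtLogTerm a b) (𝓝 ((a - b) ^ 2)) (𝓝 0) := by
  set s₀ := (a - b) ^ 2
  have hs₀ : 2 * s₀ ≠ 0 := by have := sub_ne_zero.2 hab; positivity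
  have hsqrt : Tendsto (fun s => Real.sqrt (kallen s (a ^ 2) (b ^ 2))) (𝓝 s₀) (𝓝 0) := by
    simpa only [s₀, kallen_pseudothreshold, Real.sqrt_zero] using
      (continuous_kallen_sq_sq a b).sqrt.tendsto s₀
  have hprefactor : Tendsto (fun s => Real.sqrt (kallen s (a ^ 2) (b ^ 2)) / (2 * s))
      (𝓝 s₀) (𝓝 0) := by
    rw [← zero_div (2 * s₀)]
    exact hsqrt.div (tendsto_id.const_mul 2) hs₀
  have hmid : a ^ 2 + b ^ 2 - s₀ = 2 * (a * b) := by ring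
  have hmid_ne : 2 * (a * b) ≠ 0 := by positivity
  have hlog : Tendsto (fun s => Real.log ((a ^ 2 + b ^ 2 - s - Real.sqrt (kallen s (a ^ 2) (b ^ 2)))
      / (a ^ 2 + b ^ 2 - s + Real.sqrt (kallen s (a ^ 2) (b ^ 2))))) (𝓝 s₀) (𝓝 0) := by
    have hlin : Tendsto (fun s => a ^ 2 + b ^ 2 - s) (𝓝 s₀) (𝓝 (2 * (a * b))) := by
      rw [← hmid]; exact (continuous_const.sub continuous_id).tendsto s₀
    have hratio := (hlin.sub hsqrt).div (hlin.add hsqrt) (by rwa [add_zero])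
    rw [sub_zero, add_zero, div_self hmid_ne] at hratio
    simpa only [Real.log_one, Pi.div_apply] using hratio.log one_ne_zero
  rw [← zero_mul 0]
  exact hprefactor.mul hlog

lemma tendsto_massLogTerm_pseudothreshold (hab : a ≠ b) :
    Tendsto (fun s => (a ^ 2 - b ^ 2) / (2 * s) * Real.log (a ^ 2 / b ^ 2)) (𝓝 ((a - b) ^ 2))
      (𝓝 ((a + b) / (2 * (a - b)) * Real.log (a ^ 2 / b ^ 2))) := by
  have hd : a - b ≠ 0 := sub_ne_zero.2 hab
  have hval : (a ^ 2 - b ^ 2) / (2 * (a - b) ^ 2) = (a + b) / (2 * (a - b)) := by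
    field_simp; ring
  rw [← hval]
  exact (tendsto_const_nhds.div (tendsto_id.const_mul 2) (by positivity)).mul_const _

lemma tendsto_B2_pseudothreshold (ha : a ≠ 0) (hb : b ≠ 0) (hab : a ≠ b) :
    Tendsto (B2 a b) (𝓝 ((a - b) ^ 2))
      (𝓝 ((a + b) / (2 * (a - b)) * Real.log (a ^ 2 / b ^ 2))) := by
  simpa only [funext (B2_eq_bubbleSqrtLogTerm_add a b), zero_add] using
    (tendsto_bubbleSqrtLogTerm_pseudothreshold ha hb hab).add
      (tendsto_massLogTerm_pseudothreshold hab)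

end Pseudothreshold

/-- For `m_r > m_b > 0`, as `s → (m_r − m_b)²` from below, the first (square-root times
logarithm) term of the bubble function tends to `0`, and hence `B₂(s)` tends to the
finite value `((m_r+m_b)/(2(m_r−m_b)))·ln(m_r²/m_b²)`: the principal sheet of the bubble
amplitude is free of singularities at the pseudo-threshold `s = (m_r − m_b)²`. -/
theorem bubble_regular_at_pseudothreshold (m_r m_b : ℝ) (hb : 0 < m_b) (hrb : m_b < m_r) :
    Tendsto
      (fun s : ℝ =>
        Real.sqrt (kallen s (m_r ^ 2) (m_b ^ 2)) / (2 * s) *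
          Real.log ((m_r ^ 2 + m_b ^ 2 - s - Real.sqrt (kallen s (m_r ^ 2) (m_b ^ 2))) /
            (m_r ^ 2 + m_b ^ 2 - s + Real.sqrt (kallen s (m_r ^ 2) (m_b ^ 2)))))
      (nhdsWithin ((m_r - m_b) ^ 2) (Set.Iio ((m_r - m_b) ^ 2))) (nhds 0) ∧
    Tendsto (fun s : ℝ => B2 m_r m_b s)
      (nhdsWithin ((m_r - m_b) ^ 2) (Set.Iio ((m_r - m_b) ^ 2)))
      (nhds ((m_r + m_b) / (2 * (m_r - m_b)) * Real.log (m_r ^ 2 / m_b ^ 2))) := by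
  have hr : m_r ≠ 0 := (hb.trans hrb).ne'
  have hrb' : m_r ≠ m_b := hrb.ne'
  exact ⟨(tendsto_bubbleSqrtLogTerm_pseudothreshold hr hb.ne' hrb').mono_left nhdsWithin_le_nhds,
    (tendsto_B2_pseudothreshold hr hb.ne' hrb').mono_left nhdsWithin_le_nhds⟩
end

section
/- Let m_r, m_b > 0. For all real s, s₀ < 0, the subtracted dispersion relation holds: B₂(s) − B₂(s₀) = (s₀ − s) · ∫_{(m_r+m_b)²}^{∞} √(λ(x, m_r², m_b²)) / (x·(x − s)·(x − s₀)) dx, where the integral on the right converges. That is, the renormalized bubble amplitude is recovered from its variation along the cut [(m_r+m_b)², ∞) by a once-subtracted dispersion integral. -/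
open MeasureTheory

/-!
Write `p = (m_r + m_b)²`, `q = (m_r - m_b)²`, so that `λ(x) = (x - p)(x - q)`. For `c ≤ q`
the kernel `k_c(x) = λ(c) / ((x - c) √λ(x))` (`cutKernel`) has the elementary primitive
`√λ(c) · (2 log (√(p - c) √(x - q) + √(q - c) √(x - p)) - log (x - c))` (`cutPrimitive`), hence
`∫_p^∞ k_c = Φ(c) := √λ(c) · (2 log (√(p - c) + √(q - c)) - log (p - q))` (`cutIntegral`).
The closed form of `B₂` is exactly `B₂(s) = (Φ(0) - Φ(s)) / s`, and
`(k_0 - k_s) / s = 1 / √λ - √λ / (x (x - s))`: the non-integrable `1 / √λ` cancels between `s` and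
`s₀`, leaving `(s₀ - s) √λ / (x (x - s) (x - s₀))`.
-/

open Filter Set Topology Real

theorem kallen_eq_mul (x m_r m_b : ℝ) :
    kallen x (m_r ^ 2) (m_b ^ 2) = (x - (m_r + m_b) ^ 2) * (x - (m_r - m_b) ^ 2) := by
  unfold kallen
  ring

noncomputable def cutPrimitive (p q c x : ℝ) : ℝ :=
  2 * log (√(p - c) * √(x - q) + √(q - c) * √(x - p)) - log (x - c)

noncomputable def cutKernel (p q c x : ℝ) : ℝ :=
  (p - c) * (q - c) / ((x - c) * √((x - p) * (x - q)))

noncomputable def cutIntegral (p q c : ℝ) : ℝ :=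
  √((p - c) * (q - c)) * (2 * log (√(p - c) + √(q - c)) - log (p - q))

section
variable {p q c : ℝ}

lemma cutPrimitive_self (hcq : c ≤ q) (hqp : q < p) : cutPrimitive p q c p = log (p - q) := by
  rw [cutPrimitive, sub_self, sqrt_zero, mul_zero, add_zero,
    log_mul (sqrt_pos.2 (by linarith)).ne' (sqrt_pos.2 (by linarith)).ne',
    log_sqrt (by linarith), log_sqrt (by linarith)]
  ring

lemma continuousAt_cutPrimitive_self (hcq : c ≤ q) (hqp : q < p) :
    ContinuousAt (cutPrimitive p q c) p := by
  have harg : √(p - c) * √(p - q) + √(q - c) * √(p - p) ≠ 0 := by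
    have : 0 < √(p - c) * √(p - q) := mul_pos (sqrt_pos.2 (by linarith)) (sqrt_pos.2 (by linarith))
    positivity
  have hpc : p - c ≠ 0 := by linarith
  unfold cutPrimitive
  fun_prop (disch := assumption)

lemma hasDerivAt_cutPrimitive (hcq : c ≤ q) (hqp : q < p) {x : ℝ} (hx : p < x) :
    HasDerivAt (cutPrimitive p q c)
      (√((p - c) * (q - c)) / ((x - c) * √((x - p) * (x - q)))) x := by
  have hA : √(p - c) ^ 2 = p - c := sq_sqrt (by linarith)
  have hB : √(q - c) ^ 2 = q - c := sq_sqrt (by linarith)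
  have hu : √(x - p) ^ 2 = x - p := sq_sqrt (by linarith)
  have hv : √(x - q) ^ 2 = x - q := sq_sqrt (by linarith)
  have hA0 : 0 < √(p - c) := sqrt_pos.2 (by linarith)
  have hu0 : 0 < √(x - p) := sqrt_pos.2 (by linarith)
  have hv0 : 0 < √(x - q) := sqrt_pos.2 (by linarith)
  have hN : HasDerivAt (fun y => √(p - c) * √(y - q) + √(q - c) * √(y - p))
      (√(p - c) / (2 * √(x - q)) + √(q - c) / (2 * √(x - p))) x := by
    have du := ((hasDerivAt_id' x).sub_const p).sqrt (by linarith)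
    have dv := ((hasDerivAt_id' x).sub_const q).sqrt (by linarith)
    refine ((dv.const_mul (√(p - c))).add (du.const_mul (√(q - c)))).congr_deriv ?_
    ring
  have hlog := ((hN.log (by positivity)).const_mul 2).sub
    (((hasDerivAt_id' x).sub_const c).log (by linarith))
  refine hlog.congr_deriv ?_
  rw [sqrt_mul (by linarith), sqrt_mul (by linarith)]
  have hxc : x - c ≠ 0 := by linarith
  field_simp
  linear_combination (-(√(p - c) * √(x - p))) * (hv + hB) - (√(q - c) * √(x - q)) * (hu + hA)

lemma tendsto_sqrt_sub_div_sqrt_sub_atTop (c d : ℝ) :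
    Tendsto (fun x => √(x - d) / √(x - c)) atTop (𝓝 1) := by
  have hratio : Tendsto (fun x => 1 + (c - d) / (x - c)) atTop (𝓝 (1 + 0)) :=
    tendsto_const_nhds.add
      (tendsto_const_nhds.div_atTop (tendsto_atTop_add_const_right _ _ tendsto_id))
  rw [add_zero] at hratio
  rw [← sqrt_one]
  refine ((continuous_sqrt.tendsto 1).comp hratio).congr' ?_
  filter_upwards [eventually_gt_atTop c] with x hx
  rw [Function.comp_apply, ← sqrt_div' _ (by linarith : 0 ≤ x - c)]
  congr 1
  field_simp
  ring

lemma tendsto_cutPrimitive_atTop (hcq : c ≤ q) (hqp : q < p) :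
    Tendsto (cutPrimitive p q c) atTop (𝓝 (2 * log (√(p - c) + √(q - c)))) := by
  have hA0 : 0 < √(p - c) := sqrt_pos.2 (by linarith)
  have hlim := ((((tendsto_sqrt_sub_div_sqrt_sub_atTop c q).const_mul (√(p - c))).add
    ((tendsto_sqrt_sub_div_sqrt_sub_atTop c p).const_mul (√(q - c)))).log
    (by positivity)).const_mul 2
  rw [mul_one, mul_one] at hlim
  refine hlim.congr' ?_
  filter_upwards [eventually_gt_atTop p] with x hx
  have hw : 0 < √(x - c) := sqrt_pos.2 (by linarith)
  have hv0 : 0 < √(x - q) := sqrt_pos.2 (by linarith)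
  rw [cutPrimitive, ← mul_div_assoc, ← mul_div_assoc, ← add_div,
    log_div (by positivity) hw.ne', log_sqrt (by linarith)]
  ring

lemma hasDerivAt_mul_cutPrimitive (hcq : c ≤ q) (hqp : q < p) {x : ℝ} (hx : p < x) :
    HasDerivAt (fun y => √((p - c) * (q - c)) * cutPrimitive p q c y) (cutKernel p q c x) x := by
  refine ((hasDerivAt_cutPrimitive hcq hqp hx).const_mul _).congr_deriv ?_
  rw [cutKernel, mul_div_assoc', mul_self_sqrt (by nlinarith)]

lemma cutKernel_nonneg (hcq : c ≤ q) (hqp : q < p) {x : ℝ} (hx : p < x) :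
    0 ≤ cutKernel p q c x := by
  have : 0 ≤ x - c := by linarith
  have : 0 ≤ p - c := by linarith
  have : 0 ≤ q - c := by linarith
  unfold cutKernel
  positivity

lemma integrableOn_cutKernel (hcq : c ≤ q) (hqp : q < p) :
    IntegrableOn (cutKernel p q c) (Ioi p) :=
  integrableOn_Ioi_deriv_of_nonneg (g := fun y => √((p - c) * (q - c)) * cutPrimitive p q c y)
    (continuousAt_const.mul (continuousAt_cutPrimitive_self hcq hqp)).continuousWithinAt
    (fun _ hx => hasDerivAt_mul_cutPrimitive hcq hqp hx) (fun _ hx => cutKernel_nonneg hcq hqp hx)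
    ((tendsto_cutPrimitive_atTop hcq hqp).const_mul _)

lemma integral_cutKernel (hcq : c ≤ q) (hqp : q < p) :
    ∫ x in Ioi p, cutKernel p q c x = cutIntegral p q c := by
  rw [integral_Ioi_of_hasDerivAt_of_nonneg
    (g := fun y => √((p - c) * (q - c)) * cutPrimitive p q c y)
    (continuousAt_const.mul (continuousAt_cutPrimitive_self hcq hqp)).continuousWithinAt
    (fun _ hx => hasDerivAt_mul_cutPrimitive hcq hqp hx) (fun _ hx => cutKernel_nonneg hcq hqp hx)
    ((tendsto_cutPrimitive_atTop hcq hqp).const_mul _), cutPrimitive_self hcq hqp, cutIntegral]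
  ring

end

section
variable {p q : ℝ}

lemma cutKernel_sub_div {c x : ℝ} (hc : c ≠ 0) (hx : x ≠ 0) (hxc : x ≠ c)
    (hlam : 0 < (x - p) * (x - q)) :
    (cutKernel p q 0 x - cutKernel p q c x) / c =
      1 / √((x - p) * (x - q)) - √((x - p) * (x - q)) / (x * (x - c)) := by
  have hS := sq_sqrt hlam.le
  have hS0 := (sqrt_pos.2 hlam).ne'
  have hxc' : x - c ≠ 0 := sub_ne_zero.2 hxc
  simp only [cutKernel, sub_zero]
  field_simp
  linear_combination c * hS

lemma integrableOn_sqrt_div_mul {s s₀ : ℝ} (hq : 0 ≤ q) (hqp : q < p) (hs : s < q)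
    (hs₀ : s₀ ≤ q) :
    IntegrableOn (fun x => √((x - p) * (x - q)) / (x * (x - s) * (x - s₀))) (Ioi p) := by
  have hden : ∀ x ∈ Ioi p, 0 < x * (x - s) * (x - s₀) := fun x (hx : p < x) => by
    have : 0 < x - s := by linarith
    have : 0 < x - s₀ := by linarith
    have : 0 < x := by linarith
    positivity
  refine ((integrableOn_cutKernel hs.le hqp).div_const ((p - s) * (q - s))).mono'
    (ContinuousOn.aestronglyMeasurable ?_ measurableSet_Ioi) ?_
  · exact ContinuousOn.div (by fun_prop) (by fun_prop) fun x hx => (hden x hx).ne'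
  refine (ae_restrict_iff' measurableSet_Ioi).2 (Eventually.of_forall fun x (hx : p < x) => ?_)
  have hlam : 0 < (x - p) * (x - q) := by nlinarith
  have hS := mul_self_sqrt hlam.le
  have hxs : 0 < x - s := by linarith
  have hkernel :
      cutKernel p q s x / ((p - s) * (q - s)) = 1 / ((x - s) * √((x - p) * (x - q))) := by
    have : (p - s) * (q - s) ≠ 0 := by nlinarith
    rw [cutKernel, div_right_comm, div_self this]
  rw [norm_of_nonneg (div_nonneg (sqrt_nonneg _) (hden x hx).le), hkernel,
    div_le_div_iff₀ (hden x hx) (by positivity), one_mul]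
  calc √((x - p) * (x - q)) * ((x - s) * √((x - p) * (x - q)))
      = (x - s) * ((x - p) * (x - q)) := by linear_combination (x - s) * hS
    _ ≤ (x - s) * (x * (x - s₀)) :=
        mul_le_mul_of_nonneg_left
          (mul_le_mul (by linarith) (by linarith) (by linarith) (by linarith)) hxs.le
    _ = x * (x - s) * (x - s₀) := by ring

lemma cutIntegral_dispersion {s s₀ : ℝ} (hq : 0 ≤ q) (hqp : q < p) (hs : s ≤ q) (hs₀ : s₀ ≤ q)
    (hs0 : s ≠ 0) (hs₀0 : s₀ ≠ 0) :
    (cutIntegral p q 0 - cutIntegral p q s) / s - (cutIntegral p q 0 - cutIntegral p q s₀) / s₀ =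
      (s₀ - s) * ∫ x in Ioi p, √((x - p) * (x - q)) / (x * (x - s) * (x - s₀)) := by
  have h0 := integrableOn_cutKernel hq hqp
  have hks := integrableOn_cutKernel hs hqp
  have hks₀ := integrableOn_cutKernel hs₀ hqp
  calc (cutIntegral p q 0 - cutIntegral p q s) / s - (cutIntegral p q 0 - cutIntegral p q s₀) / s₀
      = ∫ x in Ioi p, ((cutKernel p q 0 x - cutKernel p q s x) / s -
          (cutKernel p q 0 x - cutKernel p q s₀ x) / s₀) := by
        rw [integral_sub ?_ ?_, integral_div, integral_div, integral_sub h0 hks,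
          integral_sub h0 hks₀, integral_cutKernel hq hqp, integral_cutKernel hs hqp,
          integral_cutKernel hs₀ hqp]
        exacts [(h0.sub hks).div_const s, (h0.sub hks₀).div_const s₀]
    _ = ∫ x in Ioi p, (s₀ - s) * (√((x - p) * (x - q)) / (x * (x - s) * (x - s₀))) := by
        refine setIntegral_congr_fun measurableSet_Ioi fun x (hx : p < x) => ?_
        have hlam : 0 < (x - p) * (x - q) := by nlinarith
        have hx0 : x ≠ 0 := by linarith
        have hxs : x - s ≠ 0 := by linarith
        have hxs₀ : x - s₀ ≠ 0 := by linarith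
        rw [cutKernel_sub_div hs0 hx0 (by linarith) hlam,
          cutKernel_sub_div hs₀0 hx0 (by linarith) hlam]
        field_simp
        ring
    _ = _ := integral_const_mul _ _

end

lemma cutIntegral_zero {m_r m_b : ℝ} (hr : 0 < m_r) (hb : 0 < m_b) :
    cutIntegral ((m_r + m_b) ^ 2) ((m_r - m_b) ^ 2) 0 =
      (m_r ^ 2 - m_b ^ 2) * (log m_r - log m_b) := by
  wlog h : m_b ≤ m_r generalizing m_r m_b
  · have := this hb hr (by linarith)
    rw [add_comm m_b, ← neg_sub m_r, neg_sq] at this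
    linarith
  simp only [cutIntegral, sub_zero]
  rw [sqrt_mul (sq_nonneg _), sqrt_sq (by positivity), sqrt_sq (by linarith),
    show m_r + m_b + (m_r - m_b) = 2 * m_r by ring,
    show (m_r + m_b) ^ 2 - (m_r - m_b) ^ 2 = 2 ^ 2 * (m_r * m_b) by ring,
    log_mul (by norm_num) hr.ne', log_mul (by norm_num) (by positivity), log_mul hr.ne' hb.ne',
    log_pow]
  push_cast
  ring

lemma B2_eq_cutIntegral_sub {m_r m_b s : ℝ} (hr : 0 < m_r) (hb : 0 < m_b)
    (hs : s ≤ (m_r - m_b) ^ 2) :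
    B2 m_r m_b s = (cutIntegral ((m_r + m_b) ^ 2) ((m_r - m_b) ^ 2) 0 -
      cutIntegral ((m_r + m_b) ^ 2) ((m_r - m_b) ^ 2) s) / s := by
  have hqp : (m_r - m_b) ^ 2 < (m_r + m_b) ^ 2 := by nlinarith
  set A := √((m_r + m_b) ^ 2 - s)
  set B := √((m_r - m_b) ^ 2 - s)
  have hA : A ^ 2 = (m_r + m_b) ^ 2 - s := sq_sqrt (by linarith)
  have hB : B ^ 2 = (m_r - m_b) ^ 2 - s := sq_sqrt (by linarith)
  have hAB : 0 < A + B := add_pos_of_pos_of_nonneg (sqrt_pos.2 (by linarith)) (sqrt_nonneg _)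
  have hsqrt : √(kallen s (m_r ^ 2) (m_b ^ 2)) = A * B := by
    rw [kallen_eq_mul, ← sqrt_mul (by linarith)]
    ring_nf
  have hratio : (m_r ^ 2 + m_b ^ 2 - s - A * B) / (m_r ^ 2 + m_b ^ 2 - s + A * B) =
      (4 * m_r * m_b) ^ 2 / (A + B) ^ 4 := by
    have hminus : m_r ^ 2 + m_b ^ 2 - s - A * B = (A - B) ^ 2 / 2 := by
      linear_combination (-1 / 2 : ℝ) * (hA + hB)
    have hplus : m_r ^ 2 + m_b ^ 2 - s + A * B = (A + B) ^ 2 / 2 := by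
      linear_combination (-1 / 2 : ℝ) * (hA + hB)
    have hprod : (A - B) * (A + B) = 4 * m_r * m_b := by linear_combination hA - hB
    rw [hminus, hplus, ← hprod]
    field_simp [hAB.ne']
  have hlog : log ((m_r ^ 2 + m_b ^ 2 - s - A * B) / (m_r ^ 2 + m_b ^ 2 - s + A * B)) =
      2 * log (4 * m_r * m_b) - 4 * log (A + B) := by
    rw [hratio, log_div (by positivity) (by positivity), log_pow, log_pow]
    push_cast
    ring
  have hmass : log (m_r ^ 2 / m_b ^ 2) = 2 * (log m_r - log m_b) := by
    rw [log_div (by positivity) (by positivity), log_pow, log_pow]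
    push_cast
    ring
  rw [B2, hsqrt, hlog, hmass, cutIntegral_zero hr hb, cutIntegral, sqrt_mul (by linarith),
    show (m_r + m_b) ^ 2 - (m_r - m_b) ^ 2 = 4 * m_r * m_b by ring]
  ring

/-- For `m_r, m_b > 0` and real `s, s₀ < 0`, the once-subtracted dispersion relation holds:
`B₂(s) − B₂(s₀) = (s₀ − s)·∫_{(m_r+m_b)²}^{∞} √λ(x, m_r², m_b²)/(x(x−s)(x−s₀)) dx`,
the integral being convergent: the renormalized bubble amplitude is recovered from its
variation along the cut `[(m_r+m_b)², ∞)` by a subtracted dispersion integral. -/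
theorem bubble_dispersion_relation (m_r m_b s s₀ : ℝ) (hr : 0 < m_r) (hb : 0 < m_b)
    (hs : s < 0) (hs₀ : s₀ < 0) :
    IntegrableOn
      (fun x : ℝ => Real.sqrt (kallen x (m_r ^ 2) (m_b ^ 2)) / (x * (x - s) * (x - s₀)))
      (Set.Ici ((m_r + m_b) ^ 2)) ∧
    B2 m_r m_b s - B2 m_r m_b s₀ =
      (s₀ - s) *
        ∫ x in Set.Ici ((m_r + m_b) ^ 2),
          Real.sqrt (kallen x (m_r ^ 2) (m_b ^ 2)) / (x * (x - s) * (x - s₀)) := by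
  have hq : 0 ≤ (m_r - m_b) ^ 2 := sq_nonneg _
  have hqp : (m_r - m_b) ^ 2 < (m_r + m_b) ^ 2 := by nlinarith
  have hsq : s ≤ (m_r - m_b) ^ 2 := by linarith
  have hs₀q : s₀ ≤ (m_r - m_b) ^ 2 := by linarith
  simp_rw [kallen_eq_mul, integral_Ici_eq_integral_Ioi]
  refine ⟨(integrableOn_sqrt_div_mul hq hqp (by linarith) hs₀q).congr_set_ae
    Ioi_ae_eq_Ici.symm, ?_⟩
  rw [B2_eq_cutIntegral_sub hr hb hsq, B2_eq_cutIntegral_sub hr hb hs₀q,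
    cutIntegral_dispersion hq hqp hsq hs₀q hs.ne hs₀.ne]
end

section
/- Let m_i, m_j, m_k > 0 and s > 0 with √s > m_i + m_j + m_k, and for t ≥ 0 set u(t) := s + m_k² − 2√s·√(t + m_k²). Then for every t with 0 < t < λ(s, m_k², (m_i+m_j)²)/(4s) one has u(t) > (m_i + m_j)² and λ(u(t), m_i², m_j²) > 0. (Hence the integrand of the imaginary part Im(J^{ij;3}_k) of the 3-edge banana amplitude is positive definite and free of singularities in the interior of its integration domain, and vanishes at the upper boundary t = λ(s, m_k², (m_i+m_j)²)/(4s), where u(t) = (m_i+m_j)².) -/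
/-- For `m_i, m_j, m_k > 0` and `√s > m_i + m_j + m_k`, with
`u(t) := s + m_k² − 2√s·√(t + m_k²)`: for every `t` with
`0 < t < λ(s, m_k², (m_i+m_j)²)/(4s)` one has `u(t) > (m_i + m_j)²` and
`λ(u(t), m_i², m_j²) > 0`. (Hence the integrand of `Im(J^{ij;3}_k)` for the 3-edge banana
is positive and free of singularities in the interior of its integration domain.) -/
theorem banana_integrand_interior (m_i m_j m_k s : ℝ)
    (hi : 0 < m_i) (hj : 0 < m_j) (hk : 0 < m_k) (hs : 0 < s)
    (hth : m_i + m_j + m_k < Real.sqrt s) :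
    ∀ t : ℝ, 0 < t → t < kallen s (m_k ^ 2) ((m_i + m_j) ^ 2) / (4 * s) →
      (m_i + m_j) ^ 2 < s + m_k ^ 2 - 2 * Real.sqrt s * Real.sqrt (t + m_k ^ 2) ∧
      0 < kallen (s + m_k ^ 2 - 2 * Real.sqrt s * Real.sqrt (t + m_k ^ 2))
            (m_i ^ 2) (m_j ^ 2) := by
  intro t ht htu
  set r := Real.sqrt s with hr
  have hr2 : r ^ 2 = s := Real.sq_sqrt hs.le
  have hrpos : 0 < r := Real.sqrt_pos.mpr hs
  set w := Real.sqrt (t + m_k ^ 2) with hw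
  have hw0 : 0 ≤ w := Real.sqrt_nonneg _
  have hw2 : w ^ 2 = t + m_k ^ 2 := Real.sq_sqrt (by positivity)
  have hlt : t * (4 * s) < kallen s (m_k ^ 2) ((m_i + m_j) ^ 2) :=
    (lt_div_iff₀ (by linarith)).mp htu
  have hA : 0 < s + m_k ^ 2 - (m_i + m_j) ^ 2 := by nlinarith
  have hkey : 4 * s * w ^ 2 < (s + m_k ^ 2 - (m_i + m_j) ^ 2) ^ 2 := by
    unfold kallen at hlt; nlinarith
  have hsum : 0 < (s + m_k ^ 2 - (m_i + m_j) ^ 2) + 2 * r * w := by positivity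
  have h2rw : 2 * r * w < s + m_k ^ 2 - (m_i + m_j) ^ 2 := by nlinarith
  have h1 : (m_i + m_j) ^ 2 < s + m_k ^ 2 - 2 * r * w := by linarith
  refine ⟨h1, ?_⟩
  have h2 : 0 < (s + m_k ^ 2 - 2 * r * w) - (m_i - m_j) ^ 2 := by
    nlinarith [mul_pos hi hj]
  have h3 : 0 < (s + m_k ^ 2 - 2 * r * w - (m_i + m_j) ^ 2) *
      (s + m_k ^ 2 - 2 * r * w - (m_i - m_j) ^ 2) := mul_pos (by linarith) h2
  unfold kallen
  nlinarith [h3]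
end

section
/- Let m_i, m_j, m_k > 0 with m_i ≠ m_j, let s > 0 with √s > m_i + m_j + m_k, and for t ≥ 0 set u(t) := s + m_k² − 2√s·√(t + m_k²). Then λ(s, m_k², (m_i−m_j)²)/(4s) > λ(s, m_k², (m_i+m_j)²)/(4s), and for every t with λ(s, m_k², (m_i+m_j)²)/(4s) < t < λ(s, m_k², (m_i−m_j)²)/(4s) one has (m_i − m_j)² < u(t) < (m_i + m_j)², hence λ(u(t), m_i², m_j²) < 0. (This is the t-region of the contribution J^{ij;2}_k, where the bubble subgraph variation is purely imaginary; the integrand vanishes at both boundaries of the region.) -/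
/-- For `m_i, m_j, m_k > 0` with `m_i ≠ m_j` and `√s > m_i + m_j + m_k`, with
`u(t) := s + m_k² − 2√s·√(t + m_k²)`: one has
`λ(s, m_k², (m_i−m_j)²)/(4s) > λ(s, m_k², (m_i+m_j)²)/(4s)`, and for every `t` strictly
between these two values, `(m_i − m_j)² < u(t) < (m_i + m_j)²`, hence
`λ(u(t), m_i², m_j²) < 0`. (This is the `t`-region of the contribution `J^{ij;2}_k`,
where the bubble subgraph variation is purely imaginary.) -/
theorem banana_J2_region (m_i m_j m_k s : ℝ)
    (hi : 0 < m_i) (hj : 0 < m_j) (hk : 0 < m_k) (hij : m_i ≠ m_j) (hs : 0 < s)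
    (hth : m_i + m_j + m_k < Real.sqrt s) :
    kallen s (m_k ^ 2) ((m_i + m_j) ^ 2) / (4 * s) <
      kallen s (m_k ^ 2) ((m_i - m_j) ^ 2) / (4 * s) ∧
    ∀ t : ℝ, kallen s (m_k ^ 2) ((m_i + m_j) ^ 2) / (4 * s) < t →
      t < kallen s (m_k ^ 2) ((m_i - m_j) ^ 2) / (4 * s) →
      (m_i - m_j) ^ 2 < s + m_k ^ 2 - 2 * Real.sqrt s * Real.sqrt (t + m_k ^ 2) ∧
      s + m_k ^ 2 - 2 * Real.sqrt s * Real.sqrt (t + m_k ^ 2) < (m_i + m_j) ^ 2 ∧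
      kallen (s + m_k ^ 2 - 2 * Real.sqrt s * Real.sqrt (t + m_k ^ 2))
          (m_i ^ 2) (m_j ^ 2) < 0 := by
  set σ := Real.sqrt s with hσdef
  clear_value σ
  have hσ2 : σ ^ 2 = s := hσdef ▸ Real.sq_sqrt hs.le
  have hσpos : 0 < σ := hσdef ▸ Real.sqrt_pos.mpr hs
  have h4s : (0:ℝ) < 4 * s := by linarith
  have hne : m_i - m_j ≠ 0 := sub_ne_zero.mpr hij
  have hsq : 0 < (m_i - m_j) ^ 2 := by positivity
  have h1 : (m_i - m_j) ^ 2 < (m_i + m_j) ^ 2 := by nlinarith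
  have h2 : (m_i + m_j) ^ 2 < s := by nlinarith
  have hlt : kallen s (m_k ^ 2) ((m_i + m_j) ^ 2) < kallen s (m_k ^ 2) ((m_i - m_j) ^ 2) := by
    simp only [kallen]; nlinarith
  refine ⟨by gcongr, fun t ht1 ht2 => ?_⟩
  -- boundaries of sqrt(t + m_k^2)
  set Ap : ℝ := (s + m_k ^ 2 - (m_i + m_j) ^ 2) / (2 * σ) with hApdef
  set Am : ℝ := (s + m_k ^ 2 - (m_i - m_j) ^ 2) / (2 * σ) with hAmdef
  clear_value Ap Am
  have hAp_pos : 0 < Ap := by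
    rw [hApdef]; apply div_pos ?_ (by linarith); nlinarith
  have hAm_pos : 0 < Am := by
    rw [hAmdef]; apply div_pos ?_ (by linarith); nlinarith
  have hAp' : 2 * σ * Ap = s + m_k ^ 2 - (m_i + m_j) ^ 2 := by
    rw [hApdef]; field_simp
  have hAm' : 2 * σ * Am = s + m_k ^ 2 - (m_i - m_j) ^ 2 := by
    rw [hAmdef]; field_simp
  have hApsq : 4 * s * Ap ^ 2 = kallen s (m_k ^ 2) ((m_i + m_j) ^ 2) + 4 * s * m_k ^ 2 := by
    have h : 4 * s * Ap ^ 2 = (2 * σ * Ap) ^ 2 := by rw [← hσ2]; ring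
    rw [h, hAp']; simp only [kallen]; ring
  have hAmsq : 4 * s * Am ^ 2 = kallen s (m_k ^ 2) ((m_i - m_j) ^ 2) + 4 * s * m_k ^ 2 := by
    have h : 4 * s * Am ^ 2 = (2 * σ * Am) ^ 2 := by rw [← hσ2]; ring
    rw [h, hAm']; simp only [kallen]; ring
  have ht1' : kallen s (m_k ^ 2) ((m_i + m_j) ^ 2) < 4 * s * t := by
    rw [div_lt_iff₀ h4s] at ht1; linarith
  have ht2' : 4 * s * t < kallen s (m_k ^ 2) ((m_i - m_j) ^ 2) := by
    rw [lt_div_iff₀ h4s] at ht2; linarith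
  set w : ℝ := Real.sqrt (t + m_k ^ 2) with hwdef
  clear_value w
  have htpos : 0 ≤ t + m_k ^ 2 := by nlinarith [sq_nonneg Ap]
  have hw2 : w ^ 2 = t + m_k ^ 2 := hwdef ▸ Real.sq_sqrt htpos
  have hwnn : 0 ≤ w := hwdef ▸ Real.sqrt_nonneg _
  have hwgt : Ap < w := by
    have h41 : 4 * s * Ap ^ 2 < 4 * s * (t + m_k ^ 2) := by
      rw [hApsq]; ring_nf; ring_nf at ht1'; linarith
    have hsq1 : Ap ^ 2 < w ^ 2 := by
      rw [hw2]; exact lt_of_mul_lt_mul_left h41 h4s.le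
    exact lt_of_pow_lt_pow_left₀ 2 hwnn hsq1
  have hwlt : w < Am := by
    have h42 : 4 * s * (t + m_k ^ 2) < 4 * s * Am ^ 2 := by
      rw [hAmsq]; ring_nf; ring_nf at ht2'; linarith
    have hsq2 : w ^ 2 < Am ^ 2 := by
      rw [hw2]; exact lt_of_mul_lt_mul_left h42 h4s.le
    exact lt_of_pow_lt_pow_left₀ 2 hAm_pos.le hsq2
  have hu1 : (m_i - m_j) ^ 2 < s + m_k ^ 2 - 2 * σ * w := by
    have h := mul_lt_mul_of_pos_left hwlt (show (0:ℝ) < 2 * σ by linarith)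
    linarith [hAm', h]
  have hu2 : s + m_k ^ 2 - 2 * σ * w < (m_i + m_j) ^ 2 := by
    have h := mul_lt_mul_of_pos_left hwgt (show (0:ℝ) < 2 * σ by linarith)
    linarith [hAp', h]
  refine ⟨hu1, hu2, ?_⟩
  clear hApsq hAmsq ht1' ht2' hlt ht1 ht2 hAp' hAm' hApdef hAmdef hwdef hσdef
  simp only [kallen]
  nlinarith [mul_pos (sub_pos.mpr hu1) (sub_pos.mpr hu2)]
end

section
/- Let s > 0, m_k ≥ 0, and set t₀ := (s − m_k²)²/(4s) and u(t) := s + m_k² − 2√s·√(t + m_k²) for t ≥ 0. Then t₀ ≥ 0 and u(t₀) = 0. Moreover, for any c ≥ 0 with c ≤ 2(s + m_k²) one has t₀ ≥ λ(s, m_k², c)/(4s); in particular, taking c = (m_i − m_j)², the zero locus u = 0 of the uncut propagator lies inside the integration domain t ≥ λ(s, m_k², (m_i−m_j)²)/(4s) of the contribution J^{ij;1}_k, so its integrand has a pole in the domain of integration, producing the new variation of the 3-edge banana amplitude on non-principal sheets. -/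
/-! The root of `u(t) = s + M − 2√s·√(t + M)` is `t₀ = (s − M)²/(4s)`, because
`t₀ + M = ((s + M)/(2√s))²`. Writing `λ(s, M, c) = (s − M)² + c (c − 2(s + M))`, the second
summand is `≤ 0` exactly for `0 ≤ c ≤ 2(s + M)`, which puts `t₀` above the lower end
`λ(s, M, c)/(4s)` of the integration domain. -/

theorem kallen_eq_sq_sub_add (a b c : ℝ) :
    kallen a b c = (a - b) ^ 2 + c * (c - 2 * (a + b)) := by
  unfold kallen
  ring

theorem kallen_le_sq_sub {a b c : ℝ} (hc : 0 ≤ c) (hcab : c ≤ 2 * (a + b)) :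
    kallen a b c ≤ (a - b) ^ 2 := by
  rw [kallen_eq_sq_sub_add]
  nlinarith [mul_nonneg hc (sub_nonneg.mpr hcab)]

theorem sq_sub_div_add_eq_sq_add_div {s : ℝ} (hs : 0 < s) (M : ℝ) :
    (s - M) ^ 2 / (4 * s) + M = ((s + M) / (2 * √s)) ^ 2 := by
  rw [div_pow, mul_pow, Real.sq_sqrt hs.le]
  field_simp
  ring

theorem add_sub_two_sqrt_mul_sqrt_sq_sub_div_add_eq_zero {s M : ℝ} (hs : 0 < s)
    (hsM : 0 ≤ s + M) : s + M - 2 * √s * √((s - M) ^ 2 / (4 * s) + M) = 0 := by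
  have hsqrt : √s ≠ 0 := (Real.sqrt_pos.mpr hs).ne'
  rw [sq_sub_div_add_eq_sq_add_div hs, Real.sqrt_sq (by positivity)]
  field_simp
  ring

theorem banana_J1_pole_in_domain_general (s m_k : ℝ) (hs : 0 < s) :
    0 ≤ (s - m_k ^ 2) ^ 2 / (4 * s) ∧
    s + m_k ^ 2 -
        2 * Real.sqrt s * Real.sqrt ((s - m_k ^ 2) ^ 2 / (4 * s) + m_k ^ 2) = 0 ∧
    ∀ c : ℝ, 0 ≤ c → c ≤ 2 * (s + m_k ^ 2) →
      kallen s (m_k ^ 2) c / (4 * s) ≤ (s - m_k ^ 2) ^ 2 / (4 * s) := by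
  refine ⟨by positivity, add_sub_two_sqrt_mul_sqrt_sq_sub_div_add_eq_zero hs (by positivity), ?_⟩
  intro c hc hcs
  exact div_le_div_of_nonneg_right (kallen_le_sq_sub hc hcs) (by positivity)

/-- For `s > 0`, `m_k ≥ 0`, `t₀ := (s − m_k²)²/(4s)` and `u(t) := s + m_k² − 2√s·√(t + m_k²)`:
one has `t₀ ≥ 0` and `u(t₀) = 0`; moreover for any `c ≥ 0` with `c ≤ 2(s + m_k²)` one has
`t₀ ≥ λ(s, m_k², c)/(4s)`. In particular (taking `c = (m_i − m_j)²`) the zero locus `u = 0`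
of the uncut propagator lies inside the integration domain
`t ≥ λ(s, m_k², (m_i−m_j)²)/(4s)` of the contribution `J^{ij;1}_k`, so its integrand has a
pole in the domain of integration, producing the new variation of the 3-edge banana
amplitude on non-principal sheets. -/
theorem banana_J1_pole_in_domain (s m_k : ℝ) (hs : 0 < s) (hk : 0 ≤ m_k) :
    0 ≤ (s - m_k ^ 2) ^ 2 / (4 * s) ∧
    s + m_k ^ 2 -
        2 * Real.sqrt s * Real.sqrt ((s - m_k ^ 2) ^ 2 / (4 * s) + m_k ^ 2) = 0 ∧
    ∀ c : ℝ, 0 ≤ c → c ≤ 2 * (s + m_k ^ 2) →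
      kallen s (m_k ^ 2) c / (4 * s) ≤ (s - m_k ^ 2) ^ 2 / (4 * s) :=
  banana_J1_pole_in_domain_general s m_k hs
end

section
/- Let m_i, m_j, m_k > 0 and s > 0 with √s > m_i + m_j + m_k. Set T := λ(s, m_k², (m_i+m_j)²)/(4s), u(t) := s + m_k² − 2√s·√(t + m_k²), and G(t) := √t·√(λ(u(t), m_i², m_j²))/(2·u(t)·√(t + m_k²)). Then T > 0, G is continuous on [0, T] and strictly positive on the open interval (0, T), and consequently the integral ∫₀^T G(t) dt exists (is finite) and is strictly positive. (This is the existence of the Cutkosky-cut integral Var(Φ_R(b₃)) = Im(Φ_R(b₃))(s) for the 3-edge banana graph above its physical threshold, an instance of the Lemma that the cut n-edge banana integral exists.) -/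
open intervalIntegral

set_option maxHeartbeats 1000000

/-- For `m_i, m_j, m_k > 0` and `√s > m_i + m_j + m_k`, set
`T := λ(s, m_k², (m_i+m_j)²)/(4s)`, `u(t) := s + m_k² − 2√s·√(t + m_k²)` and
`G(t) := √t·√λ(u(t), m_i², m_j²)/(2·u(t)·√(t + m_k²))`. Then `T > 0`, `G` is continuous
on `[0, T]` and strictly positive on `(0, T)`, and the Cutkosky-cut integral
`Var(Φ_R(b₃))(s) = ∫₀^T G(t) dt` exists and is strictly positive. -/
theorem banana_cut_integral_exists (m_i m_j m_k s : ℝ)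
    (hi : 0 < m_i) (hj : 0 < m_j) (hk : 0 < m_k) (hs : 0 < s)
    (hth : m_i + m_j + m_k < Real.sqrt s) :
    0 < kallen s (m_k ^ 2) ((m_i + m_j) ^ 2) / (4 * s) ∧
    ContinuousOn
      (fun t : ℝ =>
        Real.sqrt t *
            Real.sqrt (kallen (s + m_k ^ 2 - 2 * Real.sqrt s * Real.sqrt (t + m_k ^ 2))
              (m_i ^ 2) (m_j ^ 2)) /
          (2 * (s + m_k ^ 2 - 2 * Real.sqrt s * Real.sqrt (t + m_k ^ 2)) *
            Real.sqrt (t + m_k ^ 2)))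
      (Set.Icc 0 (kallen s (m_k ^ 2) ((m_i + m_j) ^ 2) / (4 * s))) ∧
    (∀ t ∈ Set.Ioo (0 : ℝ) (kallen s (m_k ^ 2) ((m_i + m_j) ^ 2) / (4 * s)),
      0 < Real.sqrt t *
            Real.sqrt (kallen (s + m_k ^ 2 - 2 * Real.sqrt s * Real.sqrt (t + m_k ^ 2))
              (m_i ^ 2) (m_j ^ 2)) /
          (2 * (s + m_k ^ 2 - 2 * Real.sqrt s * Real.sqrt (t + m_k ^ 2)) *
            Real.sqrt (t + m_k ^ 2))) ∧
    IntervalIntegrable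
      (fun t : ℝ =>
        Real.sqrt t *
            Real.sqrt (kallen (s + m_k ^ 2 - 2 * Real.sqrt s * Real.sqrt (t + m_k ^ 2))
              (m_i ^ 2) (m_j ^ 2)) /
          (2 * (s + m_k ^ 2 - 2 * Real.sqrt s * Real.sqrt (t + m_k ^ 2)) *
            Real.sqrt (t + m_k ^ 2)))
      MeasureTheory.volume 0 (kallen s (m_k ^ 2) ((m_i + m_j) ^ 2) / (4 * s)) ∧
    0 < ∫ t in (0 : ℝ)..(kallen s (m_k ^ 2) ((m_i + m_j) ^ 2) / (4 * s)),
        Real.sqrt t *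
            Real.sqrt (kallen (s + m_k ^ 2 - 2 * Real.sqrt s * Real.sqrt (t + m_k ^ 2))
              (m_i ^ 2) (m_j ^ 2)) /
          (2 * (s + m_k ^ 2 - 2 * Real.sqrt s * Real.sqrt (t + m_k ^ 2)) *
            Real.sqrt (t + m_k ^ 2)) := by
  have hM : 0 < m_i + m_j := by linarith
  have hrpos : 0 < Real.sqrt s := Real.sqrt_pos.mpr hs
  have hr : Real.sqrt s ^ 2 = s := Real.sq_sqrt hs.le
  have hs1 : (m_k + (m_i + m_j)) ^ 2 < s := by
    nlinarith [mul_pos (sub_pos.mpr hth) (by positivity : (0:ℝ) < Real.sqrt s + (m_i + m_j + m_k))]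
  set T := kallen s (m_k ^ 2) ((m_i + m_j) ^ 2) / (4 * s) with hT_def
  have hkfac : kallen s (m_k ^ 2) ((m_i + m_j) ^ 2)
      = (s - (m_k + (m_i + m_j)) ^ 2) * (s - (m_k - (m_i + m_j)) ^ 2) := by
    unfold kallen; ring
  have hkpos : 0 < kallen s (m_k ^ 2) ((m_i + m_j) ^ 2) := by
    rw [hkfac]
    have h2 : (m_k - (m_i + m_j)) ^ 2 ≤ (m_k + (m_i + m_j)) ^ 2 := by nlinarith
    nlinarith
  have hT : 0 < T := div_pos hkpos (by linarith)
  have hnum : 0 < s + m_k ^ 2 - (m_i + m_j) ^ 2 := by nlinarith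
  have key : kallen s (m_k ^ 2) ((m_i + m_j) ^ 2) + 4 * s * m_k ^ 2
      = (s + m_k ^ 2 - (m_i + m_j) ^ 2) ^ 2 := by unfold kallen; ring
  have hTm : T + m_k ^ 2 = ((s + m_k ^ 2 - (m_i + m_j) ^ 2) / (2 * Real.sqrt s)) ^ 2 := by
    have h4 : (2 * Real.sqrt s) ^ 2 = 4 * s := by rw [mul_pow, hr]; ring
    rw [div_pow, h4, hT_def]
    field_simp
    linarith [key]
  have hsqrtT : Real.sqrt (T + m_k ^ 2) = (s + m_k ^ 2 - (m_i + m_j) ^ 2) / (2 * Real.sqrt s) := by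
    rw [hTm, Real.sqrt_sq (by positivity)]
  -- lower bound for u(t)
  have hu_ge : ∀ t ∈ Set.Icc (0:ℝ) T,
      (m_i + m_j) ^ 2 ≤ s + m_k ^ 2 - 2 * Real.sqrt s * Real.sqrt (t + m_k ^ 2) := by
    intro t ht
    have h1 : Real.sqrt (t + m_k ^ 2) ≤ Real.sqrt (T + m_k ^ 2) :=
      Real.sqrt_le_sqrt (by linarith [ht.2])
    rw [hsqrtT] at h1
    have h2 := mul_le_mul_of_nonneg_left h1 (by positivity : (0:ℝ) ≤ 2 * Real.sqrt s)
    rw [mul_div_cancel₀ _ (by positivity : (2 : ℝ) * Real.sqrt s ≠ 0)] at h2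
    linarith
  have hu_gt : ∀ t ∈ Set.Ico (0:ℝ) T,
      (m_i + m_j) ^ 2 < s + m_k ^ 2 - 2 * Real.sqrt s * Real.sqrt (t + m_k ^ 2) := by
    intro t ht
    have h1 : Real.sqrt (t + m_k ^ 2) < Real.sqrt (T + m_k ^ 2) :=
      Real.sqrt_lt_sqrt (by nlinarith [ht.1, sq_nonneg m_k]) (by linarith [ht.2])
    rw [hsqrtT] at h1
    have h2 := (mul_lt_mul_iff_right₀ (by positivity : (0:ℝ) < 2 * Real.sqrt s)).mpr h1
    rw [mul_div_cancel₀ _ (by positivity : (2 : ℝ) * Real.sqrt s ≠ 0)] at h2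
    linarith
  have hden : ∀ t ∈ Set.Icc (0:ℝ) T,
      0 < 2 * (s + m_k ^ 2 - 2 * Real.sqrt s * Real.sqrt (t + m_k ^ 2)) * Real.sqrt (t + m_k ^ 2) := by
    intro t ht
    have h1 := hu_ge t ht
    have hk2 : 0 < m_k ^ 2 := by positivity
    have hM2 : 0 < (m_i + m_j) ^ 2 := by positivity
    have h2 : 0 < Real.sqrt (t + m_k ^ 2) := Real.sqrt_pos.mpr (by linarith [ht.1])
    have h3 : 0 < s + m_k ^ 2 - 2 * Real.sqrt s * Real.sqrt (t + m_k ^ 2) := by linarith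
    positivity
  have hcont : ContinuousOn
      (fun t : ℝ =>
        Real.sqrt t *
            Real.sqrt (kallen (s + m_k ^ 2 - 2 * Real.sqrt s * Real.sqrt (t + m_k ^ 2))
              (m_i ^ 2) (m_j ^ 2)) /
          (2 * (s + m_k ^ 2 - 2 * Real.sqrt s * Real.sqrt (t + m_k ^ 2)) *
            Real.sqrt (t + m_k ^ 2))) (Set.Icc 0 T) := by
    have hu : Continuous fun t : ℝ => s + m_k ^ 2 - 2 * Real.sqrt s * Real.sqrt (t + m_k ^ 2) :=
      continuous_const.sub (continuous_const.mul
        (Real.continuous_sqrt.comp (continuous_id.add continuous_const)))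
    have hrt : Continuous fun t : ℝ => Real.sqrt (t + m_k ^ 2) :=
      Real.continuous_sqrt.comp (continuous_id.add continuous_const)
    have hknum : Continuous fun t : ℝ =>
        kallen (s + m_k ^ 2 - 2 * Real.sqrt s * Real.sqrt (t + m_k ^ 2)) (m_i ^ 2) (m_j ^ 2) := by
      unfold kallen
      exact (((hu.pow 2).add continuous_const).add continuous_const).sub
        (continuous_const.mul (((hu.mul continuous_const).add continuous_const).add
          (continuous_const.mul hu)))
    apply ContinuousOn.div
    · exact (Real.continuous_sqrt.mul (Real.continuous_sqrt.comp hknum)).continuousOn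
    · exact ((continuous_const.mul hu).mul hrt).continuousOn
    · exact fun t ht => ne_of_gt (hden t ht)
  have hpos : ∀ t ∈ Set.Ioo (0:ℝ) T,
      0 < Real.sqrt t *
            Real.sqrt (kallen (s + m_k ^ 2 - 2 * Real.sqrt s * Real.sqrt (t + m_k ^ 2))
              (m_i ^ 2) (m_j ^ 2)) /
          (2 * (s + m_k ^ 2 - 2 * Real.sqrt s * Real.sqrt (t + m_k ^ 2)) *
            Real.sqrt (t + m_k ^ 2)) := by
    intro t ht
    have hmem : t ∈ Set.Icc (0:ℝ) T := ⟨ht.1.le, ht.2.le⟩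
    have h1 := hu_gt t ⟨ht.1.le, ht.2⟩
    set u := s + m_k ^ 2 - 2 * Real.sqrt s * Real.sqrt (t + m_k ^ 2) with hu_def
    have hkfac2 : kallen u (m_i ^ 2) (m_j ^ 2)
        = (u - (m_i + m_j) ^ 2) * (u - (m_i - m_j) ^ 2) := by unfold kallen; ring
    have hkl : 0 < kallen u (m_i ^ 2) (m_j ^ 2) := by
      rw [hkfac2]
      have h2 : (m_i - m_j) ^ 2 < (m_i + m_j) ^ 2 := by nlinarith [mul_pos hi hj]
      exact mul_pos (by linarith) (by linarith)
    exact div_pos (mul_pos (Real.sqrt_pos.mpr ht.1) (Real.sqrt_pos.mpr hkl)) (hden t hmem)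
  have hint : IntervalIntegrable
      (fun t : ℝ =>
        Real.sqrt t *
            Real.sqrt (kallen (s + m_k ^ 2 - 2 * Real.sqrt s * Real.sqrt (t + m_k ^ 2))
              (m_i ^ 2) (m_j ^ 2)) /
          (2 * (s + m_k ^ 2 - 2 * Real.sqrt s * Real.sqrt (t + m_k ^ 2)) *
            Real.sqrt (t + m_k ^ 2))) MeasureTheory.volume 0 T := by
    apply ContinuousOn.intervalIntegrable
    rwa [Set.uIcc_of_le hT.le]
  exact ⟨hT, hcont, hpos, hint,
    intervalIntegral.intervalIntegral_pos_of_pos_on hint hpos hT⟩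
end

section
/- Let m₁, m₂, m₃ > 0 and s > 0 with √s > m₁ + m₂ + m₃. For a permutation (i, j, k) of (1, 2, 3) set T_k := λ(s, m_k², (m_i+m_j)²)/(4s), u_k(t) := s + m_k² − 2√s·√(t + m_k²), and G_{ij;k}(t) := √t·√(λ(u_k(t), m_i², m_j²))/(2·u_k(t)·√(t + m_k²)). Then the three iterated-integral representations of the variation of the 3-edge banana amplitude agree: ∫₀^{T_3} G_{12;3}(t) dt = ∫₀^{T_1} G_{23;1}(t) dt = ∫₀^{T_2} G_{31;2}(t) dt. (By Fubini's theorem, the value Var(Φ_R(b₃))(s) is independent of which pair of the three edges is taken as the bubble subgraph b₂ in the flag decomposition of b₃.) -/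
/-- The iterated-integral representation of the variation of the 3-edge banana amplitude
obtained by first cutting the bubble subgraph on the edges of masses `m_i, m_j` and then
the remaining edge of mass `m_k`:
`∫₀^{T_k} √t·√λ(u_k(t), m_i², m_j²)/(2·u_k(t)·√(t + m_k²)) dt`, where
`T_k = λ(s, m_k², (m_i+m_j)²)/(4s)` and `u_k(t) = s + m_k² − 2√s·√(t + m_k²)`. -/
noncomputable def bananaVar (m_i m_j m_k s : ℝ) : ℝ :=
  ∫ t in (0 : ℝ)..(kallen s (m_k ^ 2) ((m_i + m_j) ^ 2) / (4 * s)),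
    Real.sqrt t *
        Real.sqrt (kallen (s + m_k ^ 2 - 2 * Real.sqrt s * Real.sqrt (t + m_k ^ 2))
          (m_i ^ 2) (m_j ^ 2)) /
      (2 * (s + m_k ^ 2 - 2 * Real.sqrt s * Real.sqrt (t + m_k ^ 2)) *
        Real.sqrt (t + m_k ^ 2))

/-!
Substituting `t = λ(s, m_k², w)/(4s)` gives `√(t + m_k²) = (s + m_k² − w)/(2√s)`, so `u_k(t) = w`
becomes the invariant mass squared `s_ij` of the pair `ij`, and the integrand turns into
`1/(4s)` times the length of the slice `s_ij = w` of the Dalitz region in the plane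
`(s_ij, s_jk)`. By Fubini each iterated integral is therefore the area of the Dalitz region
divided by `4s`. The Dalitz region is cut out by the Gram determinant of the three momenta, which
does not see how the particles are labelled, and relabelling them cyclically acts on the Dalitz
plane by the area-preserving affine map `(x, y) ↦ (y, s + m₁² + m₂² + m₃² − x − y)`.
-/

open MeasureTheory Set

lemma kallen_rotate (a b c : ℝ) : kallen a b c = kallen c a b := by
  unfold kallen; ring

lemma kallen_comm_right (a b c : ℝ) : kallen a b c = kallen a c b := by
  unfold kallen; ring

lemma kallen_sq_sq_eq_mul (x a b : ℝ) :
    kallen x (a ^ 2) (b ^ 2) = (x - (a + b) ^ 2) * (x - (a - b) ^ 2) := by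
  unfold kallen; ring

lemma kallen_nonneg_of_sq_add_le {x a b : ℝ} (ha : 0 ≤ a) (hb : 0 ≤ b)
    (h : (a + b) ^ 2 ≤ x) : 0 ≤ kallen x (a ^ 2) (b ^ 2) := by
  rw [kallen_sq_sq_eq_mul]
  exact mul_nonneg (by linarith) (by nlinarith)

lemma kallen_nonneg_of_le_sq_sub {x a b : ℝ} (ha : 0 ≤ a) (hb : 0 ≤ b)
    (h : x ≤ (a - b) ^ 2) : 0 ≤ kallen x (a ^ 2) (b ^ 2) := by
  rw [kallen_sq_sq_eq_mul]
  exact mul_nonneg_of_nonpos_of_nonpos (by nlinarith) (by linarith)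

/-- Half the Gram determinant of momenta `p_a, p_b, p_c` with `p_a² = a²`, `p_b² = b²`,
`p_c² = c²`, in terms of `x = (p_a + p_b)²`, `y = (p_b + p_c)²`, `z = (p_c + p_a)²`. -/
def dalitzGram (a b c x y z : ℝ) : ℝ :=
  4 * a ^ 2 * b ^ 2 * c ^ 2 + (x - a ^ 2 - b ^ 2) * (y - b ^ 2 - c ^ 2) * (z - c ^ 2 - a ^ 2)
    - a ^ 2 * (y - b ^ 2 - c ^ 2) ^ 2 - b ^ 2 * (z - c ^ 2 - a ^ 2) ^ 2
    - c ^ 2 * (x - a ^ 2 - b ^ 2) ^ 2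

/-- Points are `(s_ab, s_bc)`; the third invariant is `s_ca = r² + a² + b² + c² − s_ab − s_bc`. -/
def dalitzRegion (a b c r : ℝ) : Set (ℝ × ℝ) :=
  {p | 0 < dalitzGram a b c p.1 p.2 (r ^ 2 + a ^ 2 + b ^ 2 + c ^ 2 - p.1 - p.2) ∧
    (a + b) ^ 2 < p.1 ∧ (b + c) ^ 2 < p.2 ∧ (c + a) ^ 2 < r ^ 2 + a ^ 2 + b ^ 2 + c ^ 2 - p.1 - p.2}

noncomputable def dalitzCenter (a b c r x : ℝ) : ℝ :=
  b ^ 2 + c ^ 2 + (x + b ^ 2 - a ^ 2) * (r ^ 2 - x - c ^ 2) / (2 * x)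

noncomputable def dalitzWidth (a b c r x : ℝ) : ℝ :=
  √(kallen x (a ^ 2) (b ^ 2)) * √(kallen (r ^ 2) (c ^ 2) x) / x

section Dalitz

variable {a b c r x : ℝ}

lemma dalitzWidth_nonneg (hx : 0 ≤ x) : 0 ≤ dalitzWidth a b c r x :=
  div_nonneg (by positivity) hx

/-- With `q = √x`, the factors `(x + b² − a²)/(2q)` and `(r² − x − c²)/(2q)` are the energies of
`b` and `c` in the rest frame of the pair `ab`, and each dominates the corresponding mass. -/
lemma four_mul_mul_mul_le (ha : 0 ≤ a) (hb : 0 ≤ b) (hc : 0 ≤ c) (hcr : c ≤ r)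
    (hlo : (a + b) ^ 2 ≤ x) (hhi : x ≤ (r - c) ^ 2) :
    4 * b * c * x ≤ (x + b ^ 2 - a ^ 2) * (r ^ 2 - x - c ^ 2) := by
  have hx : 0 ≤ x := (sq_nonneg _).trans hlo
  obtain ⟨q, hq0, rfl⟩ : ∃ q, 0 ≤ q ∧ q ^ 2 = x := ⟨√x, Real.sqrt_nonneg x, Real.sq_sqrt hx⟩
  have hlo' : a + b ≤ q := (pow_le_pow_iff_left₀ (by positivity) hq0 two_ne_zero).1 hlo
  have hhi' : q ≤ r - c := (pow_le_pow_iff_left₀ hq0 (by linarith) two_ne_zero).1 hhi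
  have hb' : 2 * b * q ≤ q ^ 2 + b ^ 2 - a ^ 2 := by nlinarith
  have hc' : 2 * c * q ≤ r ^ 2 - q ^ 2 - c ^ 2 := by nlinarith
  calc 4 * b * c * q ^ 2 = (2 * b * q) * (2 * c * q) := by ring
    _ ≤ _ := mul_le_mul hb' hc' (by positivity) ((by positivity : (0:ℝ) ≤ 2 * b * q).trans hb')

lemma sqrt_kallen_mul_sqrt_kallen_le (ha : 0 ≤ a) (hb : 0 ≤ b) (hc : 0 ≤ c) (hcr : c ≤ r)
    (hlo : (a + b) ^ 2 ≤ x) (hhi : x ≤ (r - c) ^ 2) :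
    √(kallen x (a ^ 2) (b ^ 2)) * √(kallen (r ^ 2) (c ^ 2) x) ≤
      (x + b ^ 2 - a ^ 2) * (r ^ 2 - x - c ^ 2) - 4 * b * c * x := by
  have hx : 0 ≤ x := (sq_nonneg _).trans hlo
  have hP := sub_nonneg.2 (four_mul_mul_mul_le ha hb hc hcr hlo hhi)
  have hsq : kallen x (a ^ 2) (b ^ 2) * kallen (r ^ 2) (c ^ 2) x ≤
      ((x + b ^ 2 - a ^ 2) * (r ^ 2 - x - c ^ 2) - 4 * b * c * x) ^ 2 := by
    have key : ((x + b ^ 2 - a ^ 2) * (r ^ 2 - x - c ^ 2) - 4 * b * c * x) ^ 2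
        - kallen x (a ^ 2) (b ^ 2) * kallen (r ^ 2) (c ^ 2) x
        = 4 * x * ((b + c) * x - (b * r ^ 2 + c * (a ^ 2 - b ^ 2 - b * c))) ^ 2 := by
      unfold kallen; ring
    nlinarith [mul_nonneg hx (sq_nonneg ((b + c) * x - (b * r ^ 2 + c * (a ^ 2 - b ^ 2 - b * c))))]
  rw [← Real.sqrt_mul (kallen_nonneg_of_sq_add_le ha hb hlo)]
  exact (Real.sqrt_le_sqrt hsq).trans_eq (Real.sqrt_sq hP)

lemma four_mul_dalitzGram (y : ℝ) (hx : x ≠ 0) :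
    4 * x * dalitzGram a b c x y (r ^ 2 + a ^ 2 + b ^ 2 + c ^ 2 - x - y) =
      kallen x (a ^ 2) (b ^ 2) * kallen (r ^ 2) (c ^ 2) x
        - (2 * x * (y - dalitzCenter a b c r x)) ^ 2 := by
  unfold dalitzGram dalitzCenter kallen
  field_simp
  ring

lemma dalitzGram_pos_iff (y : ℝ) (hx : 0 < x) (h₁ : 0 ≤ kallen x (a ^ 2) (b ^ 2))
    (h₂ : 0 ≤ kallen (r ^ 2) (c ^ 2) x) :
    0 < dalitzGram a b c x y (r ^ 2 + a ^ 2 + b ^ 2 + c ^ 2 - x - y) ↔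
      y ∈ Ioo (dalitzCenter a b c r x - dalitzWidth a b c r x / 2)
        (dalitzCenter a b c r x + dalitzWidth a b c r x / 2) := by
  set w := dalitzWidth a b c r x
  have hw : x * w = √(kallen x (a ^ 2) (b ^ 2)) * √(kallen (r ^ 2) (c ^ 2) x) :=
    mul_div_cancel₀ _ hx.ne'
  have hw0 : 0 ≤ w := dalitzWidth_nonneg hx.le
  have hkk : kallen x (a ^ 2) (b ^ 2) * kallen (r ^ 2) (c ^ 2) x = (x * w) ^ 2 := by
    rw [hw, mul_pow, Real.sq_sqrt h₁, Real.sq_sqrt h₂]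
  rw [← mul_pos_iff_of_pos_left (by positivity : (0 : ℝ) < 4 * x), four_mul_dalitzGram y hx.ne',
    hkk, sub_pos, sq_lt_sq, abs_of_nonneg (by positivity : 0 ≤ x * w), abs_lt, mem_Ioo]
  constructor <;> rintro ⟨hl, hu⟩ <;> constructor <;> nlinarith

lemma add_sq_le_dalitzCenter_sub (ha : 0 ≤ a) (hb : 0 ≤ b) (hc : 0 ≤ c) (hcr : c ≤ r)
    (hlo : (a + b) ^ 2 < x) (hhi : x ≤ (r - c) ^ 2) :
    (b + c) ^ 2 ≤ dalitzCenter a b c r x - dalitzWidth a b c r x / 2 := by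
  have hx : 0 < x := (sq_nonneg _).trans_lt hlo
  have H := sqrt_kallen_mul_sqrt_kallen_le ha hb hc hcr hlo.le hhi
  have e : dalitzCenter a b c r x - dalitzWidth a b c r x / 2 - (b + c) ^ 2 =
      ((x + b ^ 2 - a ^ 2) * (r ^ 2 - x - c ^ 2) - 4 * b * c * x
        - √(kallen x (a ^ 2) (b ^ 2)) * √(kallen (r ^ 2) (c ^ 2) x)) / (2 * x) := by
    unfold dalitzCenter dalitzWidth
    field_simp
    ring
  linarith [div_nonneg (sub_nonneg.2 H) (by positivity : (0 : ℝ) ≤ 2 * x)]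

lemma dalitzCenter_add_le (ha : 0 ≤ a) (hb : 0 ≤ b) (hc : 0 ≤ c) (hcr : c ≤ r)
    (hlo : (a + b) ^ 2 < x) (hhi : x ≤ (r - c) ^ 2) :
    dalitzCenter a b c r x + dalitzWidth a b c r x / 2 ≤
      r ^ 2 + a ^ 2 + b ^ 2 + c ^ 2 - x - (c + a) ^ 2 := by
  have hx : 0 < x := (sq_nonneg _).trans_lt hlo
  have H := sqrt_kallen_mul_sqrt_kallen_le hb ha hc hcr (by linarith) hhi
  rw [← kallen_comm_right] at H
  have e : r ^ 2 + a ^ 2 + b ^ 2 + c ^ 2 - x - (c + a) ^ 2 -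
      (dalitzCenter a b c r x + dalitzWidth a b c r x / 2) =
      ((x + a ^ 2 - b ^ 2) * (r ^ 2 - x - c ^ 2) - 4 * a * c * x
        - √(kallen x (a ^ 2) (b ^ 2)) * √(kallen (r ^ 2) (c ^ 2) x)) / (2 * x) := by
    unfold dalitzCenter dalitzWidth
    field_simp
    ring
  linarith [div_nonneg (sub_nonneg.2 H) (by positivity : (0 : ℝ) ≤ 2 * x)]

lemma lt_sq_sub_of_mem_dalitzRegion (ha : 0 ≤ a) (hb : 0 ≤ b) {p : ℝ × ℝ}
    (hp : p ∈ dalitzRegion a b c r) : p.1 < (r - c) ^ 2 := by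
  obtain ⟨hG, hlo, hy, hz⟩ := hp
  by_contra! hhi
  have hx : 0 < p.1 := (sq_nonneg _).trans_lt hlo
  have h₂ : kallen (r ^ 2) (c ^ 2) p.1 ≤ 0 := by
    rw [kallen_rotate, kallen_sq_sq_eq_mul]
    exact mul_nonpos_of_nonpos_of_nonneg (by nlinarith) (by linarith)
  have h₁ := kallen_nonneg_of_sq_add_le ha hb hlo.le
  have := four_mul_dalitzGram (a := a) (b := b) (c := c) (r := r) p.2 hx.ne'
  nlinarith [mul_nonpos_of_nonneg_of_nonpos h₁ h₂, mul_pos (by positivity : (0 : ℝ) < 4 * p.1) hG]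

lemma mem_dalitzRegion_iff (ha : 0 ≤ a) (hb : 0 ≤ b) (hc : 0 ≤ c) (hcr : c ≤ r) (y : ℝ)
    (hlo : (a + b) ^ 2 < x) (hhi : x ≤ (r - c) ^ 2) :
    (x, y) ∈ dalitzRegion a b c r ↔
      y ∈ Ioo (dalitzCenter a b c r x - dalitzWidth a b c r x / 2)
        (dalitzCenter a b c r x + dalitzWidth a b c r x / 2) := by
  have hx : 0 < x := (sq_nonneg _).trans_lt hlo
  have hG := dalitzGram_pos_iff y hx (kallen_nonneg_of_sq_add_le ha hb hlo.le)
    (by rw [kallen_rotate]; exact kallen_nonneg_of_le_sq_sub (by linarith) hc hhi)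
  have hlower := add_sq_le_dalitzCenter_sub ha hb hc hcr hlo hhi
  have hupper := dalitzCenter_add_le ha hb hc hcr hlo hhi
  exact ⟨fun hp => hG.1 hp.1, fun hy => ⟨hG.2 hy, hlo, by linarith [hy.1], by linarith [hy.2]⟩⟩

lemma dalitzRegion_eq_regionBetween (ha : 0 ≤ a) (hb : 0 ≤ b) (hc : 0 ≤ c) (hcr : c ≤ r) :
    dalitzRegion a b c r =
      regionBetween (fun x => dalitzCenter a b c r x - dalitzWidth a b c r x / 2)
        (fun x => dalitzCenter a b c r x + dalitzWidth a b c r x / 2)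
        (Ioo ((a + b) ^ 2) ((r - c) ^ 2)) := by
  ext ⟨x, y⟩
  constructor
  · intro hp
    have hhi := lt_sq_sub_of_mem_dalitzRegion ha hb hp
    exact ⟨⟨hp.2.1, hhi⟩, (mem_dalitzRegion_iff ha hb hc hcr y hp.2.1 hhi.le).1 hp⟩
  · rintro ⟨⟨hlo, hhi⟩, hy⟩
    exact (mem_dalitzRegion_iff ha hb hc hcr y hlo hhi.le).2 hy

lemma continuousOn_dalitzCenter (a b c r : ℝ) : ContinuousOn (dalitzCenter a b c r) (Ioi 0) := by
  unfold dalitzCenter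
  fun_prop (disch := intro x hx; exact (mul_pos two_pos hx).ne')

lemma continuousOn_dalitzWidth (a b c r : ℝ) : ContinuousOn (dalitzWidth a b c r) (Ioi 0) := by
  unfold dalitzWidth kallen
  fun_prop (disch := intro x hx; exact ne_of_gt hx)

lemma volume_dalitzRegion (ha : 0 < a) (hb : 0 < b) (hc : 0 ≤ c) (h : a + b + c ≤ r) :
    volume (dalitzRegion a b c r) =
      ENNReal.ofReal (∫ x in (a + b) ^ 2..(r - c) ^ 2, dalitzWidth a b c r x) := by
  have hpos : Icc ((a + b) ^ 2) ((r - c) ^ 2) ⊆ Ioi 0 :=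
    fun x hx => (by positivity : (0 : ℝ) < (a + b) ^ 2).trans_le hx.1
  have hlohi : (a + b) ^ 2 ≤ (r - c) ^ 2 := by gcongr; linarith
  have hC := (continuousOn_dalitzCenter a b c r).mono hpos
  have hW := (continuousOn_dalitzWidth a b c r).mono hpos
  have hf : IntegrableOn (fun x => dalitzCenter a b c r x - dalitzWidth a b c r x / 2)
      (Ioo ((a + b) ^ 2) ((r - c) ^ 2)) :=
    (hC.sub (hW.div_const 2)).integrableOn_Icc.mono_set Ioo_subset_Icc_self
  have hg : IntegrableOn (fun x => dalitzCenter a b c r x + dalitzWidth a b c r x / 2)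
      (Ioo ((a + b) ^ 2) ((r - c) ^ 2)) :=
    (hC.add (hW.div_const 2)).integrableOn_Icc.mono_set Ioo_subset_Icc_self
  have hfg : ∀ x ∈ Ioo ((a + b) ^ 2) ((r - c) ^ 2),
      dalitzCenter a b c r x - dalitzWidth a b c r x / 2 ≤
        dalitzCenter a b c r x + dalitzWidth a b c r x / 2 := fun x hx => by
    linarith [dalitzWidth_nonneg (a := a) (b := b) (c := c) (r := r)
      (hpos (Ioo_subset_Icc_self hx)).le]
  rw [dalitzRegion_eq_regionBetween ha.le hb.le hc (by linarith), Measure.volume_eq_prod,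
    volume_regionBetween_eq_integral hf hg measurableSet_Ioo hfg,
    intervalIntegral.integral_of_le hlohi, integral_Ioc_eq_integral_Ioo]
  congr 1
  refine setIntegral_congr_fun measurableSet_Ioo fun x _ => ?_
  simp only [Pi.sub_apply]
  ring

lemma dalitzGram_rotate (a b c x y z : ℝ) : dalitzGram b c a y z x = dalitzGram a b c x y z := by
  unfold dalitzGram; ring

lemma mem_dalitzRegion_rotate {a b c r x y : ℝ} :
    (y, r ^ 2 + a ^ 2 + b ^ 2 + c ^ 2 - x - y) ∈ dalitzRegion b c a r ↔
      (x, y) ∈ dalitzRegion a b c r := by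
  have hz : r ^ 2 + b ^ 2 + c ^ 2 + a ^ 2 - y - (r ^ 2 + a ^ 2 + b ^ 2 + c ^ 2 - x - y) = x := by
    ring
  simp only [dalitzRegion, mem_ofPred_eq, hz, dalitzGram_rotate]
  tauto

lemma measurePreserving_snd_sub_sub (S : ℝ) :
    MeasurePreserving (fun p : ℝ × ℝ => (p.2, S - p.1 - p.2)) volume volume := by
  have hcomp : (fun p : ℝ × ℝ => (p.2, S - p.1 - p.2)) =
      Prod.map id (S - ·) ∘ fun p => (p.2, p.2 + p.1) := by
    funext p
    simp only [Function.comp_apply, Prod.map_apply, id, sub_sub, add_comm p.1]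
  rw [hcomp]
  exact ((MeasurePreserving.id volume).prod (volume.measurePreserving_sub_left S)).comp
    (measurePreserving_prod_add_swap volume volume)

lemma isOpen_dalitzRegion (a b c r : ℝ) : IsOpen (dalitzRegion a b c r) := by
  simp only [dalitzRegion, dalitzGram, ofPred_and]
  refine (isOpen_lt ?_ ?_).inter ((isOpen_lt ?_ ?_).inter ((isOpen_lt ?_ ?_).inter
    (isOpen_lt ?_ ?_))) <;> fun_prop

lemma volume_dalitzRegion_rotate (a b c r : ℝ) :
    volume (dalitzRegion b c a r) = volume (dalitzRegion a b c r) := by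
  have hpre : (fun p : ℝ × ℝ => (p.2, r ^ 2 + a ^ 2 + b ^ 2 + c ^ 2 - p.1 - p.2)) ⁻¹'
      dalitzRegion b c a r = dalitzRegion a b c r := by
    ext ⟨x, y⟩
    exact mem_dalitzRegion_rotate
  rw [← hpre, (measurePreserving_snd_sub_sub _).measure_preimage
    (isOpen_dalitzRegion b c a r).measurableSet.nullMeasurableSet]

end Dalitz

noncomputable def bananaIntegrand (a b c s t : ℝ) : ℝ :=
  √t * √(kallen (s + c ^ 2 - 2 * √s * √(t + c ^ 2)) (a ^ 2) (b ^ 2)) /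
    (2 * (s + c ^ 2 - 2 * √s * √(t + c ^ 2)) * √(t + c ^ 2))

lemma bananaIntegrand_kallen_div {a b c r w : ℝ} (hr : 0 < r) (hw : w < r ^ 2 + c ^ 2) :
    bananaIntegrand a b c (r ^ 2) (kallen (r ^ 2) (c ^ 2) w / (4 * r ^ 2)) =
      dalitzWidth a b c r w / (2 * (r ^ 2 + c ^ 2 - w)) := by
  have hE : 0 < (r ^ 2 + c ^ 2 - w) / (2 * r) := div_pos (by linarith) (by positivity)
  have hsqrt_add : √(kallen (r ^ 2) (c ^ 2) w / (4 * r ^ 2) + c ^ 2) =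
      (r ^ 2 + c ^ 2 - w) / (2 * r) := by
    rw [← Real.sqrt_sq hE.le]
    congr 1
    unfold kallen
    field_simp
    ring
  have hsqrt :
      √(kallen (r ^ 2) (c ^ 2) w / (4 * r ^ 2)) = √(kallen (r ^ 2) (c ^ 2) w) / (2 * r) := by
    rw [Real.sqrt_div' _ (by positivity), show 4 * r ^ 2 = (2 * r) ^ 2 by ring,
      Real.sqrt_sq (by positivity)]
  have hu : r ^ 2 + c ^ 2 - 2 * √(r ^ 2) * ((r ^ 2 + c ^ 2 - w) / (2 * r)) = w := by
    rw [Real.sqrt_sq hr.le]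
    field_simp
    ring
  unfold bananaIntegrand dalitzWidth
  rw [hsqrt_add, hu, hsqrt]
  field_simp

lemma bananaVar_sq_eq_integral_dalitzWidth {a b c r : ℝ} (ha : 0 ≤ a) (hb : 0 ≤ b) (hc : 0 < c)
    (h : a + b + c ≤ r) :
    bananaVar a b c (r ^ 2) =
      (∫ x in (a + b) ^ 2..(r - c) ^ 2, dalitzWidth a b c r x) / (4 * r ^ 2) := by
  have hr : 0 < r := by linarith
  have hlohi : (a + b) ^ 2 ≤ (r - c) ^ 2 := by gcongr; linarith
  have hhi : (r - c) ^ 2 < r ^ 2 + c ^ 2 := by nlinarith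
  set φ : ℝ → ℝ := fun w => kallen (r ^ 2) (c ^ 2) w / (4 * r ^ 2)
  have hφ : ∀ w, HasDerivAt φ ((2 * w - 2 * (r ^ 2 + c ^ 2)) / (4 * r ^ 2)) w := by
    intro w
    have e : kallen (r ^ 2) (c ^ 2) =
        fun w => w * w - 2 * (r ^ 2 + c ^ 2) * w + (r ^ 2 - c ^ 2) ^ 2 := by
      funext w
      unfold kallen
      ring
    refine HasDerivAt.div_const ?_ _
    rw [e]
    exact ((((hasDerivAt_id w).mul (hasDerivAt_id w)).sub
      ((hasDerivAt_id w).const_mul (2 * (r ^ 2 + c ^ 2)))).add_const _).congr_deriv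
      (by simp only [id]; ring)
  -- `φ` decreases from `T` to `0`, so the substitution needs nothing of the integrand.
  have hsub := intervalIntegral.integral_deriv_smul_comp_of_deriv_nonpos
    (g := bananaIntegrand a b c (r ^ 2)) (a := (a + b) ^ 2) (b := (r - c) ^ 2)
    (fun w _ => (hφ w).continuousAt.continuousWithinAt) (fun w _ => hφ w) fun w hw => by
      rw [max_eq_right hlohi] at hw
      exact div_nonpos_of_nonpos_of_nonneg (by linarith [hw.2]) (by positivity)
  have hφhi : φ ((r - c) ^ 2) = 0 := by
    simp only [φ, kallen]
    ring
  have hpt : EqOn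
      (fun w => ((2 * w - 2 * (r ^ 2 + c ^ 2)) / (4 * r ^ 2)) •
        (bananaIntegrand a b c (r ^ 2) ∘ φ) w)
      (fun w => -(dalitzWidth a b c r w / (4 * r ^ 2))) (uIcc ((a + b) ^ 2) ((r - c) ^ 2)) := by
    intro w hw
    rw [uIcc_of_le hlohi] at hw
    have hw' : w < r ^ 2 + c ^ 2 := hw.2.trans_lt hhi
    have hne : r ^ 2 + c ^ 2 - w ≠ 0 := by linarith
    simp only [Function.comp_apply, smul_eq_mul, φ]
    rw [bananaIntegrand_kallen_div hr hw']
    field_simp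
    ring
  calc bananaVar a b c (r ^ 2)
      = -∫ u in φ ((a + b) ^ 2)..φ ((r - c) ^ 2), bananaIntegrand a b c (r ^ 2) u := by
        rw [hφhi, intervalIntegral.integral_symm, neg_neg]
        rfl
    _ = -∫ w in (a + b) ^ 2..(r - c) ^ 2, -(dalitzWidth a b c r w / (4 * r ^ 2)) := by
        rw [← hsub, intervalIntegral.integral_congr hpt]
    _ = _ := by rw [intervalIntegral.integral_neg, neg_neg, intervalIntegral.integral_div]

lemma bananaVar_sq_eq_volume_dalitzRegion {a b c r : ℝ} (ha : 0 < a) (hb : 0 < b) (hc : 0 < c)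
    (h : a + b + c ≤ r) :
    bananaVar a b c (r ^ 2) = (volume (dalitzRegion a b c r)).toReal / (4 * r ^ 2) := by
  have hlohi : (a + b) ^ 2 ≤ (r - c) ^ 2 := by gcongr; linarith
  rw [bananaVar_sq_eq_integral_dalitzWidth ha.le hb.le hc h, volume_dalitzRegion ha hb hc.le h,
    ENNReal.toReal_ofReal (intervalIntegral.integral_nonneg hlohi fun x hx =>
      dalitzWidth_nonneg ((sq_nonneg _).trans hx.1))]

lemma bananaVar_sq_rotate {a b c r : ℝ} (ha : 0 < a) (hb : 0 < b) (hc : 0 < c)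
    (h : a + b + c ≤ r) : bananaVar a b c (r ^ 2) = bananaVar b c a (r ^ 2) := by
  rw [bananaVar_sq_eq_volume_dalitzRegion ha hb hc h,
    bananaVar_sq_eq_volume_dalitzRegion hb hc ha (by linarith), volume_dalitzRegion_rotate a b c r]

/-- For `m₁, m₂, m₃ > 0` and `√s > m₁ + m₂ + m₃`, the three iterated-integral
representations of the variation of the 3-edge banana amplitude agree:
`∫₀^{T₃} G_{12;3} = ∫₀^{T₁} G_{23;1} = ∫₀^{T₂} G_{31;2}` — by Fubini, `Var(Φ_R(b₃))(s)`
is independent of which pair of edges is taken as the bubble subgraph `b₂` in the flag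
decomposition of `b₃`. -/
theorem banana_var_flag_independent (m₁ m₂ m₃ s : ℝ)
    (h1 : 0 < m₁) (h2 : 0 < m₂) (h3 : 0 < m₃) (hs : 0 < s)
    (hth : m₁ + m₂ + m₃ < Real.sqrt s) :
    bananaVar m₁ m₂ m₃ s = bananaVar m₂ m₃ m₁ s ∧
    bananaVar m₂ m₃ m₁ s = bananaVar m₃ m₁ m₂ s := by
  obtain ⟨r, hr, rfl⟩ : ∃ r, 0 ≤ r ∧ r ^ 2 = s := ⟨√s, Real.sqrt_nonneg s, Real.sq_sqrt hs.le⟩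
  rw [Real.sqrt_sq hr] at hth
  exact ⟨bananaVar_sq_rotate h1 h2 h3 hth.le, bananaVar_sq_rotate h2 h3 h1 (by linarith)⟩
end
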